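/- arXiv:1505.05450 — 3 statements merged into one kernel-verified Lean document; each statement's English description precedes it below -/
import Mathlib

section
/- Let ẙ₁,…,ẙ_N ∈ ℝ⁴ be unit vectors with ẙᵢ = [ẙ̄ᵢ; ẙ_{i,4}], and k₁,…,k_N > 0. Define the 3×3 matrices G := Σᵢ kᵢ (ẙ̄ᵢ)_×², S := Σᵢ kᵢ ẙ_{i,4} (ẙ̄ᵢ)_×, D := Σᵢ kᵢ ẙ_{i,4}² (I₃ − ẙ̄ᵢẙ̄ᵢᵀ), and H := S G⁻¹ S − D. Assume G and H are invertible. If ε_p, ε_r ∈ ℝ³ satisfy S ε_p = G ε_r and D ε_p = S ε_r, then ε_p = 0 and ε_r = 0. -/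
open Matrix BigOperators

noncomputable section

/-- The Euclidean norm of a vector in `ℝⁿ`. -/
def enorm {n : ℕ} (x : Fin n → ℝ) : ℝ := Real.sqrt (∑ i, x i ^ 2)

/-- Normalization of a vector: `x / |x|`. -/
def nrm {n : ℕ} (x : Fin n → ℝ) : Fin n → ℝ := (_root_.enorm x)⁻¹ • x

/-- `R ∈ SO(3)`: rotation matrices. -/
def SO3 (R : Matrix (Fin 3) (Fin 3) ℝ) : Prop := Rᵀ * R = 1 ∧ R.det = 1

/-- The 4×4 block matrix `[[M, m],[0ᵀ, 0]]`. -/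
def blk (M : Matrix (Fin 3) (Fin 3) ℝ) (m : Fin 3 → ℝ) : Matrix (Fin 4) (Fin 4) ℝ :=
  fun i j =>
    if h : (i : ℕ) < 3 then
      if h' : (j : ℕ) < 3 then M ⟨i, h⟩ ⟨j, h'⟩ else m ⟨i, h⟩
    else 0

/-- The 4×4 block matrix `[[R, p],[0ᵀ, 1]]`. -/
def toSE3 (R : Matrix (Fin 3) (Fin 3) ℝ) (p : Fin 3 → ℝ) : Matrix (Fin 4) (Fin 4) ℝ :=
  fun i j =>
    if h : (i : ℕ) < 3 then
      if h' : (j : ℕ) < 3 then R ⟨i, h⟩ ⟨j, h'⟩ else p ⟨i, h⟩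
    else if (j : ℕ) < 3 then 0 else 1

/-- The Special Euclidean group SE(3), as a subset of `ℝ^{4×4}`. -/
def SE3 : Set (Matrix (Fin 4) (Fin 4) ℝ) := {X | ∃ R p, SO3 R ∧ X = toSE3 R p}

/-- The skew-symmetric matrix `ω_×` associated with the cross product by `ω`. -/
def crossMat (ω : Fin 3 → ℝ) : Matrix (Fin 3) (Fin 3) ℝ :=
  !![0, -ω 2, ω 1; ω 2, 0, -ω 0; -ω 1, ω 0, 0]

/-- The cross product on `ℝ³`. -/
def cross3 (u v : Fin 3 → ℝ) : Fin 3 → ℝ :=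
  ![u 1 * v 2 - u 2 * v 1, u 2 * v 0 - u 0 * v 2, u 0 * v 1 - u 1 * v 0]

/-- The Lie algebra se(3), as a subset of `ℝ^{4×4}`. -/
def se3 : Set (Matrix (Fin 4) (Fin 4) ℝ) := {A | ∃ ω V, A = blk (crossMat ω) V}

/-- The projection `P : ℝ^{4×4} → se(3)`:
`P([[M₁, m₂],[m₃ᵀ, m₄]]) = [[(M₁ − M₁ᵀ)/2, m₂],[0ᵀ, 0]]`. -/
def projP (M : Matrix (Fin 4) (Fin 4) ℝ) : Matrix (Fin 4) (Fin 4) ℝ :=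
  fun i j =>
    if (i : ℕ) < 3 then (if (j : ℕ) < 3 then (M i j - M j i) / 2 else M i j) else 0

/-- The trace (Frobenius) inner product `⟨M₁, M₂⟩ = tr(M₁ᵀ M₂)`. -/
def mip (M₁ M₂ : Matrix (Fin 4) (Fin 4) ℝ) : ℝ := (M₁ᵀ * M₂).trace

/-- First three components of a vector in `ℝ⁴`. -/
def vbar (x : Fin 4 → ℝ) : Fin 3 → ℝ := fun i => x (Fin.castSucc i)

/-- The vector `[v; c] ∈ ℝ⁴`. -/
def vec4 (v : Fin 3 → ℝ) (c : ℝ) : Fin 4 → ℝ := Fin.snoc v c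

/-- The innovation term `Δ(X̂, Y) = −P(Σᵢ kᵢ (I₄ − eᵢeᵢᵀ) ẙᵢ eᵢᵀ)` where
`eᵢ = X̂yᵢ/|X̂yᵢ|`. -/
def innov {N : ℕ} (k : Fin N → ℝ) (ystar y : Fin N → Fin 4 → ℝ)
    (Xh : Matrix (Fin 4) (Fin 4) ℝ) : Matrix (Fin 4) (Fin 4) ℝ :=
  -projP (∑ i, k i •
    ((1 - vecMulVec (nrm (Xh *ᵥ y i)) (nrm (Xh *ᵥ y i))) *
      vecMulVec (ystar i) (nrm (Xh *ᵥ y i))))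

/-! Solving the first equation for `ε_r = G⁻¹ S ε_p` and substituting into the second gives
`(S G⁻¹ S − D) ε_p = 0`, i.e. `H ε_p = 0`: `H` is the Schur complement that eliminates `ε_r`.
Invertibility of `H` then forces `ε_p = 0`, and `G ε_r = S ε_p = 0` forces `ε_r = 0`. -/

namespace Matrix

variable {n R : Type*} [Fintype n] [DecidableEq n] [CommRing R]

lemma eq_nonsing_inv_mulVec_of_mulVec_eq {G : Matrix n n R} (hG : IsUnit G.det) {u v : n → R}
    (h : G *ᵥ v = u) : v = G⁻¹ *ᵥ u := by
  rw [← h, mulVec_mulVec, nonsing_inv_mul G hG, one_mulVec]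

lemma eq_zero_of_isUnit_det_of_mulVec_eq_zero {M : Matrix n n R} (hM : IsUnit M.det)
    {v : n → R} (hv : M *ᵥ v = 0) : v = 0 :=
  eq_zero_of_det_mem_nonZeroDivisors_of_mulVec_eq_zero hM.mem_nonZeroDivisors hv

lemma schur_mulVec_eq_zero_of_mulVec_eq {G S D : Matrix n n R} (hG : IsUnit G.det)
    {εp εr : n → R} (h1 : S *ᵥ εp = G *ᵥ εr) (h2 : D *ᵥ εp = S *ᵥ εr) :
    (S * G⁻¹ * S - D) *ᵥ εp = 0 := by
  rw [sub_mulVec, h2, eq_nonsing_inv_mulVec_of_mulVec_eq hG h1.symm, ← mulVec_mulVec,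
    ← mulVec_mulVec, sub_self]

end Matrix

theorem linearized_stationarity_general
    (G S D H : Matrix (Fin 3) (Fin 3) ℝ)
    (hH : H = S * G⁻¹ * S - D)
    (hGinv : IsUnit G.det) (hHinv : IsUnit H.det)
    (εp εr : Fin 3 → ℝ) (h1 : S *ᵥ εp = G *ᵥ εr) (h2 : D *ᵥ εp = S *ᵥ εr) :
    εp = 0 ∧ εr = 0 := by
  have hεp : εp = 0 := Matrix.eq_zero_of_isUnit_det_of_mulVec_eq_zero hHinv
    (hH ▸ Matrix.schur_mulVec_eq_zero_of_mulVec_eq hGinv h1 h2)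
  refine ⟨hεp, Matrix.eq_zero_of_isUnit_det_of_mulVec_eq_zero hGinv ?_⟩
  rw [← h1, hεp, mulVec_zero]

/-- the linearized stationarity argument: with
`G = Σᵢ kᵢ (ẙ̄ᵢ)_×²`, `S = Σᵢ kᵢ ẙ_{i,4} (ẙ̄ᵢ)_×`,
`D = Σᵢ kᵢ ẙ_{i,4}² (I₃ − ẙ̄ᵢẙ̄ᵢᵀ)` and `H = S G⁻¹ S − D` invertible,
the system `S ε_p = G ε_r`, `D ε_p = S ε_r` only has the solution `ε_p = ε_r = 0`. -/
theorem linearized_stationarity {N : ℕ} (ystar : Fin N → Fin 4 → ℝ)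
    (hunit : ∀ i, _root_.enorm (ystar i) = 1) (k : Fin N → ℝ) (hk : ∀ i, 0 < k i)
    (G S D H : Matrix (Fin 3) (Fin 3) ℝ)
    (hG : G = ∑ i, k i • (crossMat (vbar (ystar i)) * crossMat (vbar (ystar i))))
    (hS : S = ∑ i, (k i * ystar i 3) • crossMat (vbar (ystar i)))
    (hD : D = ∑ i, (k i * (ystar i 3) ^ 2) •
      ((1 : Matrix (Fin 3) (Fin 3) ℝ) - vecMulVec (vbar (ystar i)) (vbar (ystar i))))
    (hH : H = S * G⁻¹ * S - D)
    (hGinv : IsUnit G.det) (hHinv : IsUnit H.det)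
    (εp εr : Fin 3 → ℝ) (h1 : S *ᵥ εp = G *ᵥ εr) (h2 : D *ᵥ εp = S *ᵥ εr) :
    εp = 0 ∧ εr = 0 :=
  linearized_stationarity_general G S D H hH hGinv hHinv εp εr h1 h2
end
end

section
/- Let M ∈ ℝ^{4×4}, let X̂ ∈ ℝ^{4×4} be invertible, and let B ∈ se(3). Then ⟨−M, X̂BX̂⁻¹ + P(M)⟩ + ⟨P(X̂ᵀ M X̂⁻ᵀ), B⟩ = −‖P(M)‖². -/
open Matrix BigOperators

noncomputable section

/-! `P` is the Frobenius-orthogonal projection onto `se(3)`: it maps into `se(3)` and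
`⟨P A, B⟩ = ⟨A, B⟩` for `B ∈ se(3)`. Moreover `A ↦ X̂ᵀ A X̂⁻ᵀ` is the adjoint of `B ↦ X̂ B X̂⁻¹`,
so the second term cancels the conjugation part of the first, leaving
`−⟨M, P M⟩ = −⟨P M, P M⟩`. -/

theorem Matrix.trace_transpose_mul_conj {m n : Type*} [Fintype m] [Fintype n] {R : Type*}
    [CommSemiring R] (A : Matrix m m R) (B : Matrix n n R) (X : Matrix m n R)
    (Y : Matrix n m R) :
    ((Xᵀ * A * Yᵀ)ᵀ * B).trace = (Aᵀ * (X * B * Y)).trace := by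
  simp only [transpose_mul, transpose_transpose, Matrix.mul_assoc]
  rw [trace_mul_comm]
  simp only [Matrix.mul_assoc]

theorem mip_neg_left_add_right (A B C : Matrix (Fin 4) (Fin 4) ℝ) :
    mip (-A) (B + C) = -mip A B - mip A C := by
  simp only [mip, transpose_neg, Matrix.neg_mul, Matrix.mul_add, trace_neg, trace_add]
  ring

theorem mip_eq_sum (A B : Matrix (Fin 4) (Fin 4) ℝ) :
    mip A B = ∑ i, ∑ j, A i j * B i j := by
  rw [mip, trace, Finset.sum_comm]
  simp only [diag_apply, mul_apply, transpose_apply]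

theorem projP_mem_se3 (M : Matrix (Fin 4) (Fin 4) ℝ) : projP M ∈ se3 := by
  refine ⟨![(M 2 1 - M 1 2) / 2, (M 0 2 - M 2 0) / 2, (M 1 0 - M 0 1) / 2],
    fun i => M i.castSucc 3, ?_⟩
  ext i j
  fin_cases i <;> fin_cases j <;> simp [projP, blk, crossMat] <;> ring

theorem mip_projP_left_of_mem_se3 (A : Matrix (Fin 4) (Fin 4) ℝ) {B : Matrix (Fin 4) (Fin 4) ℝ}
    (hB : B ∈ se3) : mip (projP A) B = mip A B := by
  obtain ⟨ω, V, rfl⟩ := hB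
  simp [mip_eq_sum, Fin.sum_univ_four, projP, blk, crossMat]
  ring

theorem mip_projP_self (M : Matrix (Fin 4) (Fin 4) ℝ) :
    mip (projP M) (projP M) = mip M (projP M) :=
  mip_projP_left_of_mem_se3 M (projP_mem_se3 M)

theorem lyapunov_derivative_identity_general (M Xh : Matrix (Fin 4) (Fin 4) ℝ)
    (B : Matrix (Fin 4) (Fin 4) ℝ) (hB : B ∈ se3) :
    mip (-M) (Xh * B * Xh⁻¹ + projP M) + mip (projP (Xhᵀ * M * (Xh⁻¹)ᵀ)) B =
      -mip (projP M) (projP M) := by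
  have hconj : mip (projP (Xhᵀ * M * (Xh⁻¹)ᵀ)) B = mip M (Xh * B * Xh⁻¹) := by
    rw [mip_projP_left_of_mem_se3 _ hB, mip, mip, trace_transpose_mul_conj]
  rw [mip_neg_left_add_right, hconj, mip_projP_self]
  ring

/-- the Lyapunov-derivative identity
`⟨−M, X̂BX̂⁻¹ + P(M)⟩ + ⟨P(X̂ᵀMX̂⁻ᵀ), B⟩ = −‖P(M)‖²` for `B ∈ se(3)` and invertible `X̂`. -/
theorem lyapunov_derivative_identity (M Xh : Matrix (Fin 4) (Fin 4) ℝ)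
    (hXh : IsUnit Xh.det) (B : Matrix (Fin 4) (Fin 4) ℝ) (hB : B ∈ se3) :
    mip (-M) (Xh * B * Xh⁻¹ + projP M) + mip (projP (Xhᵀ * M * (Xh⁻¹)ᵀ)) B =
      -mip (projP M) (projP M) :=
  lyapunov_derivative_identity_general M Xh B hB
end
end

section
/- Let X, X̂ ∈ SE(3), let ẙ₁,…,ẙ_N ∈ ℝ⁴ be unit vectors, and k₁,…,k_N > 0. Define yᵢ := X⁻¹ẙᵢ/|X⁻¹ẙᵢ| and E := X̂X⁻¹. Then Δ(X̂, (y₁,…,y_N)) = Δ(E, (ẙ₁,…,ẙ_N)); i.e. the innovation term evaluated on the measured outputs depends only on the group error E, so the error dynamics Ė = −Δ(E, Y̊)E are autonomous. -/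
open Matrix BigOperators

noncomputable section

/-! `X̂yᵢ = |X⁻¹ẙᵢ|⁻¹ • X̂X⁻¹ẙᵢ` is a positive multiple of `X̂X⁻¹ẙᵢ` (or both vanish,
and `nrm 0 = 0`). Normalization forgets positive factors, so the directions `eᵢ`, through
which alone `Δ` sees the outputs, agree for `(X̂, yᵢ)` and `(X̂X⁻¹, ẙᵢ)`. -/

theorem enorm_eq_norm_toLp {n : ℕ} (x : Fin n → ℝ) :
    _root_.enorm x = ‖WithLp.toLp 2 x‖ := by
  simp [_root_.enorm, EuclideanSpace.norm_eq]

theorem nrm_smul_of_pos {n : ℕ} {c : ℝ} (hc : 0 < c) (x : Fin n → ℝ) :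
    nrm (c • x) = nrm x := by
  rw [nrm, nrm, enorm_eq_norm_toLp, enorm_eq_norm_toLp, WithLp.toLp_smul, norm_smul,
    Real.norm_of_nonneg hc.le, smul_smul, mul_inv, mul_comm c⁻¹, mul_assoc,
    inv_mul_cancel₀ hc.ne', mul_one]

theorem nrm_zero {n : ℕ} : nrm (0 : Fin n → ℝ) = 0 := by
  simp [nrm]

theorem nrm_mulVec_nrm {m n : ℕ} (A : Matrix (Fin m) (Fin n) ℝ) (v : Fin n → ℝ) :
    nrm (A *ᵥ nrm v) = nrm (A *ᵥ v) := by
  rcases eq_or_ne v 0 with rfl | hv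
  · simp [nrm_zero]
  · have hpos : 0 < (_root_.enorm v)⁻¹ := by
      rwa [inv_pos, enorm_eq_norm_toLp, norm_pos_iff, Ne, WithLp.toLp_eq_zero]
    rw [show nrm v = (_root_.enorm v)⁻¹ • v from rfl, mulVec_smul, nrm_smul_of_pos hpos]

theorem innov_nrm_mulVec {N : ℕ} (k : Fin N → ℝ) (ystar y : Fin N → Fin 4 → ℝ)
    (A Xh : Matrix (Fin 4) (Fin 4) ℝ) :
    innov k ystar (fun i => nrm (A *ᵥ y i)) Xh = innov k ystar y (Xh * A) := by
  simp only [innov, nrm_mulVec_nrm, mulVec_mulVec]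

theorem innovation_depends_on_group_error_general {N : ℕ} (X Xh : Matrix (Fin 4) (Fin 4) ℝ)
    (ystar : Fin N → Fin 4 → ℝ) (k : Fin N → ℝ) :
    innov k ystar (fun i => nrm (X⁻¹ *ᵥ ystar i)) Xh =
      innov k ystar ystar (Xh * X⁻¹) :=
  innov_nrm_mulVec k ystar ystar X⁻¹ Xh

/-- with measured outputs `yᵢ = X⁻¹ẙᵢ/|X⁻¹ẙᵢ|` and group error
`E = X̂X⁻¹`, the innovation satisfies `Δ(X̂, (y₁,…,y_N)) = Δ(E, (ẙ₁,…,ẙ_N))`, so the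
error dynamics are autonomous. -/
theorem innovation_depends_on_group_error {N : ℕ} (X Xh : Matrix (Fin 4) (Fin 4) ℝ)
    (hX : X ∈ SE3) (hXh : Xh ∈ SE3) (ystar : Fin N → Fin 4 → ℝ)
    (hunit : ∀ i, _root_.enorm (ystar i) = 1) (k : Fin N → ℝ) (hk : ∀ i, 0 < k i) :
    innov k ystar (fun i => nrm (X⁻¹ *ᵥ ystar i)) Xh =
      innov k ystar ystar (Xh * X⁻¹) :=
  innovation_depends_on_group_error_general X Xh ystar k
end
end
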